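/- Suppose c > 0 satisfies the gap condition, z* is an optimal threshold for P, ẑ ∈ ℝ satisfies f̂(ẑ) = P, and f(z*) > P. Then the set {i ∈ I : C_i > ẑ} is nonempty and z* = min{C_i : i ∈ I, C_i > ẑ}. -/

import Mathlib

/-- Ramp function `w_c`: `1` for `z ≥ 0`, `z/c + 1` for `-c ≤ z < 0`, `0` for `z < -c`. -/
noncomputable def rampW (c z : ℝ) : ℝ :=
  if 0 ≤ z then 1 else if -c ≤ z then z / c + 1 else 0

/-- The cumulative criticality function `f(z) = ∑_{i : C i ≤ z} ℓ i`. -/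
noncomputable def ccf {I : Type*} [Fintype I] (ℓ C : I → ℝ) (z : ℝ) : ℝ :=
  ∑ i ∈ Finset.univ.filter (fun i => C i ≤ z), ℓ i

/-- The Lipschitz surrogate CCF `f̂(z) = ∑_i ℓ i · w_c (z - C i)`. -/
noncomputable def sccf {I : Type*} [Fintype I] (ℓ C : I → ℝ) (c z : ℝ) : ℝ :=
  ∑ i, ℓ i * rampW c (z - C i)

/-- The gap condition on `c`: criticality values that differ, differ by at least `c`. -/
def GapCond {I : Type*} (C : I → ℝ) (c : ℝ) : Prop :=
  ∀ i j : I, C j < C i → c ≤ C i - C j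

/-- `z` is an optimal threshold for `P`: `f(z) ≥ P` and `f(z') < P` for all `z' < z`. -/
def OptThresh {I : Type*} [Fintype I] (ℓ C : I → ℝ) (P z : ℝ) : Prop :=
  P ≤ ccf ℓ C z ∧ ∀ z' < z, ccf ℓ C z' < P

lemma rampW_nonneg {c : ℝ} (hc : 0 < c) (z : ℝ) : 0 ≤ rampW c z := by
  unfold rampW
  split_ifs with h1 h2
  · norm_num
  · have h3 : z / c + 1 = (z + c) / c := by field_simp
    rw [h3]
    exact div_nonneg (by linarith) hc.le
  · exact le_refl 0

lemma rampW_one {c z : ℝ} (hz : 0 ≤ z) : rampW c z = 1 := if_pos hz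

lemma rampW_lt_one {c z : ℝ} (hc : 0 < c) (hz : z < 0) : rampW c z < 1 := by
  unfold rampW
  split_ifs with h1 h2
  · linarith
  · have : z / c < 0 := div_neg_of_neg_of_pos hz hc
    linarith
  · norm_num

lemma rampW_zero {c z : ℝ} (hc : 0 < c) (hz : z < -c) : rampW c z = 0 := by
  unfold rampW
  split_ifs with h1 h2
  · linarith
  · linarith
  · rfl

lemma ccf_mono {I : Type*} [Fintype I] (ℓ C : I → ℝ) (hℓ : ∀ i, 0 < ℓ i)
    {z1 z2 : ℝ} (h : z1 ≤ z2) : ccf ℓ C z1 ≤ ccf ℓ C z2 := by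
  apply Finset.sum_le_sum_of_subset_of_nonneg
  · intro i hi
    simp only [Finset.mem_filter, Finset.mem_univ, true_and] at *
    exact le_trans hi h
  · exact fun i _ _ => (hℓ i).le

lemma sccf_eq {I : Type*} [Fintype I] (ℓ C : I → ℝ) (c z : ℝ) :
    sccf ℓ C c z = ccf ℓ C z +
      ∑ i ∈ Finset.univ.filter (fun i => z < C i), ℓ i * rampW c (z - C i) := by
  unfold sccf ccf
  rw [← Finset.sum_filter_add_sum_filter_not Finset.univ (fun i => C i ≤ z)]
  congr 1
  · apply Finset.sum_congr rfl
    intro i hi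
    simp only [Finset.mem_filter] at hi
    rw [rampW_one (by linarith [hi.2])]
    ring
  · apply Finset.sum_congr
    · ext i; simp [not_le]
    · intro i _; rfl

/-- Lemma 3, case `f(z*) > P`: `z* = min {C i : C i > ẑ}`. -/
theorem opt_threshold_min_above_zhat
    {I : Type*} [Fintype I] [Nonempty I] (ℓ C : I → ℝ)
    (hℓ : ∀ i, 0 < ℓ i) (hC : ∀ i, C i ∈ Set.Icc (0 : ℝ) 1)
    (c : ℝ) (hc : 0 < c) (hgap : GapCond C c)
    (P zstar : ℝ) (hopt : OptThresh ℓ C P zstar)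
    (zhat : ℝ) (hzhat : sccf ℓ C c zhat = P)
    (hstrict : P < ccf ℓ C zstar) :
    ∃ hne : (Finset.univ.filter (fun i : I => zhat < C i)).Nonempty,
      zstar = (Finset.univ.filter (fun i : I => zhat < C i)).inf' hne C := by
  obtain ⟨hopt1, hopt2⟩ := hopt
  -- sccf ≥ ccf at zhat
  have hsum_nonneg : ∀ (z : ℝ),
      0 ≤ ∑ i ∈ Finset.univ.filter (fun i => z < C i), ℓ i * rampW c (z - C i) :=
    fun z => Finset.sum_nonneg fun i _ => mul_nonneg (hℓ i).le (rampW_nonneg hc _)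
  have hge : ccf ℓ C zhat ≤ P := by
    rw [← hzhat, sccf_eq]; linarith [hsum_nonneg zhat]
  -- zhat < zstar
  have hzz : zhat < zstar := by
    by_contra h
    push_neg at h
    have := ccf_mono ℓ C hℓ h
    linarith
  -- there exists i0 with C i0 = zstar
  have hex : ∃ i0, C i0 = zstar := by
    by_contra h
    push_neg at h
    set T := Finset.univ.filter (fun i => C i ≤ zstar) with hT
    have hTne : T.Nonempty := by
      by_contra hTe
      rw [Finset.not_nonempty_iff_eq_empty] at hTe
      have : ccf ℓ C zstar = 0 := by unfold ccf; rw [← hT, hTe]; simp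
      have hP0 : 0 ≤ P := by
        have := hopt2 (zstar - 1) (by linarith)
        have h0 : 0 ≤ ccf ℓ C (zstar - 1) :=
          Finset.sum_nonneg fun i _ => (hℓ i).le
        linarith
      linarith
    set M := T.sup' hTne C with hM
    obtain ⟨jM, hjM, hjMC⟩ := Finset.exists_mem_eq_sup' hTne C
    have hjMle : C jM ≤ zstar := by
      simp only [hT, Finset.mem_filter] at hjM; exact hjM.2
    have hMeq : M = C jM := hM.trans hjMC
    have hMlt : M < zstar := lt_of_le_of_ne (hMeq ▸ hjMle) (hMeq ▸ h jM)
    have heq : ccf ℓ C M = ccf ℓ C zstar := by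
      unfold ccf
      congr 1
      ext i
      simp only [Finset.mem_filter, Finset.mem_univ, true_and]
      constructor
      · intro hi; linarith
      · intro hi
        have : i ∈ T := by simp [hT, hi]
        calc C i ≤ M := hM ▸ Finset.le_sup' C this
        _ ≤ M := le_refl M
    have := hopt2 M hMlt
    linarith
  obtain ⟨i0, hi0⟩ := hex
  have hi0S : i0 ∈ Finset.univ.filter (fun i : I => zhat < C i) := by
    simp [hi0, hzz]
  have hne : (Finset.univ.filter (fun i : I => zhat < C i)).Nonempty := ⟨i0, hi0S⟩
  refine ⟨hne, ?_⟩
  set S := Finset.univ.filter (fun i : I => zhat < C i) with hS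
  set m := S.inf' hne C with hm
  obtain ⟨j0, hj0S, hj0C⟩ := Finset.exists_mem_eq_inf' hne C
  have hmle : m ≤ zstar := hi0 ▸ Finset.inf'_le C hi0S
  have hmgt : zhat < m := by
    rw [hm, hj0C]
    simp only [hS, Finset.mem_filter] at hj0S
    exact hj0S.2
  -- key: P < ccf m
  have hkey : P < ccf ℓ C m := by
    have hdec := sccf_eq ℓ C c zhat
    rw [hzhat] at hdec
    -- split S into C i = m and C i ≠ m
    have hsplit : ∑ i ∈ S, ℓ i * rampW c (zhat - C i)
        = ∑ i ∈ S.filter (fun i => C i = m), ℓ i * rampW c (zhat - C i) := by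
      rw [← Finset.sum_filter_add_sum_filter_not S (fun i => C i = m)]
      have : ∑ i ∈ S.filter (fun i => ¬ C i = m), ℓ i * rampW c (zhat - C i) = 0 := by
        apply Finset.sum_eq_zero
        intro i hi
        simp only [Finset.mem_filter] at hi
        have hgt : m < C i := lt_of_le_of_ne (Finset.inf'_le C hi.1) (Ne.symm hi.2)
        have hmj : m = C j0 := hm.trans hj0C
        have hgap' : c ≤ C i - m := by
          rw [hmj]; exact hgap i j0 (by rw [← hmj]; exact hgt)
        have : zhat - C i < -c := by linarith
        rw [rampW_zero hc this, mul_zero]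
      linarith
    have hj0m : j0 ∈ S.filter (fun i => C i = m) := by
      simp only [Finset.mem_filter]; exact ⟨hj0S, hj0C.symm⟩
    have hlt : ∑ i ∈ S.filter (fun i => C i = m), ℓ i * rampW c (zhat - C i)
        < ∑ i ∈ S.filter (fun i => C i = m), ℓ i := by
      apply Finset.sum_lt_sum_of_nonempty ⟨j0, hj0m⟩
      intro i hi
      simp only [Finset.mem_filter] at hi
      have hw : rampW c (zhat - C i) < 1 := rampW_lt_one hc (by rw [hi.2]; linarith)
      nlinarith [hℓ i, rampW_nonneg hc (zhat - C i)]
    -- ccf zhat + ∑_{C i = m} ℓ i ≤ ccf m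
    have hle : ccf ℓ C zhat + ∑ i ∈ S.filter (fun i => C i = m), ℓ i ≤ ccf ℓ C m := by
      unfold ccf
      rw [← Finset.sum_filter_add_sum_filter_not
        (Finset.univ.filter (fun i => C i ≤ m)) (fun i => C i ≤ zhat)]
      have h1 : (Finset.univ.filter (fun i => C i ≤ m)).filter (fun i => C i ≤ zhat)
          = Finset.univ.filter (fun i => C i ≤ zhat) := by
        ext i
        simp only [Finset.mem_filter, Finset.mem_univ, true_and]
        constructor
        · exact fun hi => hi.2
        · exact fun hi => ⟨by linarith, hi⟩
      have h2 : S.filter (fun i => C i = m)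
          ⊆ (Finset.univ.filter (fun i => C i ≤ m)).filter (fun i => ¬ C i ≤ zhat) := by
        intro i hi
        simp only [hS, Finset.mem_filter, Finset.mem_univ, true_and] at *
        exact ⟨hi.2.le, not_le.mpr hi.1⟩
      rw [h1]
      exact add_le_add_right
        (Finset.sum_le_sum_of_subset_of_nonneg h2 (fun i _ _ => (hℓ i).le)) _
    rw [hsplit] at hdec
    linarith
  -- conclude
  by_contra hne2
  have hmlt : m < zstar := lt_of_le_of_ne hmle (fun h => hne2 h.symm)
  have := hopt2 m hmlt
  linarith
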